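/- The complex plane wave u(x,t) = exp(i(kx − ωt)) satisfies the two-band homogenized equation ∂ₜ⁴u − (q+d) ∂ₜ⁴∂ₓ²u + dq ∂ₜ⁴∂ₓ⁴u − (−ω_b² dq + pd − nq) ∂ₜ²∂ₓ⁴u + (p − ω_b² q − ω_b² d − n) ∂ₜ²∂ₓ²u + ω_b² ∂ₜ²u − ω_b² n ∂ₓ²u + (ω_b² n q − n p) ∂ₓ⁴u = 0 at every (x,t) if and only if ( ω² (1 + d k²) − n k² ) · ( ω² (1 + q k²) − ω_b² (1 + q k²) + p k² ) = 0; consequently, since 1 + d k² > 0 and 1 + q k² > 0, the plane wave is a solution if and only if ω² = n k² / (1 + d k²) or ω² = ω_b² − p k² / (1 + q k²). -/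

import Mathlib

/-!
Every exponential `exp (a x + b t)` is an eigenfunction of `∂ₓ` and `∂ₜ`, so a constant-coefficient
operator maps it to its symbol times itself. For the plane wave `a = i k`, `b = -i ω`, the symbol of
the two-band operator factors into the acoustic and optical dispersion relations; since the
exponential never vanishes, the wave is a solution exactly when one of the factors vanishes.
-/

open MeasureTheory Filter

/-- Partial derivative in the first (space) variable. -/
noncomputable def pdx (u : ℝ → ℝ → ℂ) : ℝ → ℝ → ℂ := fun x t => deriv (fun y => u y t) x

/-- Partial derivative in the second (time) variable. -/
noncomputable def pdt (u : ℝ → ℝ → ℂ) : ℝ → ℝ → ℂ := fun x t => deriv (fun s => u x s) t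

noncomputable def expWave (a b c : ℂ) : ℝ → ℝ → ℂ := fun x t => c * Complex.exp (a * x + b * t)

theorem pdx_expWave (a b c : ℂ) : pdx (expWave a b c) = expWave a b (c * a) := by
  funext x t
  have h : HasDerivAt (fun y : ℂ => c * Complex.exp (a * y + b * t))
      (c * (Complex.exp (a * x + b * t) * a)) x :=
    ((((hasDerivAt_id (x : ℂ)).const_mul a).add_const (b * t)).cexp.const_mul c).congr_deriv
      (by simp)
  simpa [pdx, expWave, mul_comm, mul_left_comm, mul_assoc] using h.comp_ofReal.deriv

theorem pdt_expWave (a b c : ℂ) : pdt (expWave a b c) = expWave a b (c * b) := by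
  funext x t
  have h : HasDerivAt (fun s : ℂ => c * Complex.exp (a * x + b * s))
      (c * (Complex.exp (a * x + b * t) * b)) t :=
    ((((hasDerivAt_id (t : ℂ)).const_mul b).const_add (a * x)).cexp.const_mul c).congr_deriv
      (by simp)
  simpa [pdt, expWave, mul_comm, mul_left_comm, mul_assoc] using h.comp_ofReal.deriv

theorem iterate_pdx_expWave (a b c : ℂ) (m : ℕ) :
    pdx^[m] (expWave a b c) = expWave a b (c * a ^ m) := by
  induction m with
  | zero => simp
  | succ m ih => rw [Function.iterate_succ_apply', ih, pdx_expWave, pow_succ, mul_assoc]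

theorem iterate_pdt_expWave (a b c : ℂ) (m : ℕ) :
    pdt^[m] (expWave a b c) = expWave a b (c * b ^ m) := by
  induction m with
  | zero => simp
  | succ m ih => rw [Function.iterate_succ_apply', ih, pdt_expWave, pow_succ, mul_assoc]

theorem forall_expWave_eq_zero_iff (a b c : ℂ) : (∀ x t, expWave a b c x t = 0) ↔ c = 0 := by
  refine ⟨fun h => ?_, fun hc x t => by simp [expWave, hc]⟩
  simpa [expWave] using h 0 0

section TwoBand

variable (n d p q ωb : ℝ)

noncomputable def twoBandOperator (u : ℝ → ℝ → ℂ) : ℝ → ℝ → ℂ := fun x t =>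
  pdt^[4] u x t - ((q + d : ℝ) : ℂ) * pdt^[4] (pdx^[2] u) x t
    + ((d * q : ℝ) : ℂ) * pdt^[4] (pdx^[4] u) x t
    - ((-ωb ^ 2 * d * q + p * d - n * q : ℝ) : ℂ) * pdt^[2] (pdx^[4] u) x t
    + ((p - ωb ^ 2 * q - ωb ^ 2 * d - n : ℝ) : ℂ) * pdt^[2] (pdx^[2] u) x t
    + ((ωb ^ 2 : ℝ) : ℂ) * pdt^[2] u x t
    - ((ωb ^ 2 * n : ℝ) : ℂ) * pdx^[2] u x t
    + ((ωb ^ 2 * n * q - n * p : ℝ) : ℂ) * pdx^[4] u x t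

/-- The symbol of `twoBandOperator`, as a polynomial in `A = a²` and `B = b²` where `a`, `b` stand
for `∂ₓ`, `∂ₜ`. -/
noncomputable def twoBandSymbol (A B : ℂ) : ℂ :=
  B ^ 2 - ((q + d : ℝ) : ℂ) * B ^ 2 * A + ((d * q : ℝ) : ℂ) * B ^ 2 * A ^ 2
    - ((-ωb ^ 2 * d * q + p * d - n * q : ℝ) : ℂ) * B * A ^ 2
    + ((p - ωb ^ 2 * q - ωb ^ 2 * d - n : ℝ) : ℂ) * B * A
    + ((ωb ^ 2 : ℝ) : ℂ) * B - ((ωb ^ 2 * n : ℝ) : ℂ) * A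
    + ((ωb ^ 2 * n * q - n * p : ℝ) : ℂ) * A ^ 2

theorem twoBandOperator_expWave (a b c : ℂ) :
    twoBandOperator n d p q ωb (expWave a b c) =
      expWave a b (c * twoBandSymbol n d p q ωb (a ^ 2) (b ^ 2)) := by
  funext x t
  simp only [twoBandOperator, twoBandSymbol, iterate_pdx_expWave, iterate_pdt_expWave, expWave]
  ring

theorem twoBandSymbol_neg_sq (k ω : ℝ) :
    twoBandSymbol n d p q ωb (-(k : ℂ) ^ 2) (-(ω : ℂ) ^ 2) =
      ((ω ^ 2 * (1 + d * k ^ 2) - n * k ^ 2)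
        * (ω ^ 2 * (1 + q * k ^ 2) - ωb ^ 2 * (1 + q * k ^ 2) + p * k ^ 2) : ℝ) := by
  simp only [twoBandSymbol]
  push_cast
  ring

end TwoBand

theorem mul_sub_eq_zero_iff_eq_div {w D a : ℝ} (hD : D ≠ 0) : w * D - a = 0 ↔ w = a / D := by
  rw [sub_eq_zero, eq_div_iff hD]

theorem mul_sub_mul_add_eq_zero_iff_eq_sub_div {w D a b : ℝ} (hD : D ≠ 0) :
    w * D - b * D + a = 0 ↔ w = b - a / D := by
  constructor
  · intro h
    rw [eq_sub_iff_add_eq, ← eq_sub_iff_add_eq', div_eq_iff hD]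
    linarith
  · rintro rfl
    rw [sub_mul, div_mul_cancel₀ a hD]
    ring

theorem stmt_8_general (n d p q ωb k ω : ℝ)
    (hd : 0 ≤ d) (hq : 0 ≤ q)
    (u : ℝ → ℝ → ℂ)
    (hu : u = fun (x t : ℝ) => Complex.exp (Complex.I * ((k : ℂ) * (x : ℂ) - (ω : ℂ) * (t : ℂ)))) :
    ((∀ x t : ℝ,
      pdt^[4] u x t - ((q + d : ℝ) : ℂ) * pdt^[4] (pdx^[2] u) x t
        + ((d * q : ℝ) : ℂ) * pdt^[4] (pdx^[4] u) x t
        - ((-ωb ^ 2 * d * q + p * d - n * q : ℝ) : ℂ) * pdt^[2] (pdx^[4] u) x t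
        + ((p - ωb ^ 2 * q - ωb ^ 2 * d - n : ℝ) : ℂ) * pdt^[2] (pdx^[2] u) x t
        + ((ωb ^ 2 : ℝ) : ℂ) * pdt^[2] u x t
        - ((ωb ^ 2 * n : ℝ) : ℂ) * pdx^[2] u x t
        + ((ωb ^ 2 * n * q - n * p : ℝ) : ℂ) * pdx^[4] u x t = 0)
      ↔ (ω ^ 2 * (1 + d * k ^ 2) - n * k ^ 2)
          * (ω ^ 2 * (1 + q * k ^ 2) - ωb ^ 2 * (1 + q * k ^ 2) + p * k ^ 2) = 0)
    ∧ ((∀ x t : ℝ,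
      pdt^[4] u x t - ((q + d : ℝ) : ℂ) * pdt^[4] (pdx^[2] u) x t
        + ((d * q : ℝ) : ℂ) * pdt^[4] (pdx^[4] u) x t
        - ((-ωb ^ 2 * d * q + p * d - n * q : ℝ) : ℂ) * pdt^[2] (pdx^[4] u) x t
        + ((p - ωb ^ 2 * q - ωb ^ 2 * d - n : ℝ) : ℂ) * pdt^[2] (pdx^[2] u) x t
        + ((ωb ^ 2 : ℝ) : ℂ) * pdt^[2] u x t
        - ((ωb ^ 2 * n : ℝ) : ℂ) * pdx^[2] u x t
        + ((ωb ^ 2 * n * q - n * p : ℝ) : ℂ) * pdx^[4] u x t = 0)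
      ↔ (ω ^ 2 = n * k ^ 2 / (1 + d * k ^ 2)
          ∨ ω ^ 2 = ωb ^ 2 - p * k ^ 2 / (1 + q * k ^ 2))) := by
  have hu_wave : u = expWave (Complex.I * k) (-(Complex.I * ω)) 1 := by
    funext x t
    simp only [hu, expWave, one_mul]
    ring_nf
  have hk : (Complex.I * k) ^ 2 = -(k : ℂ) ^ 2 := by rw [mul_pow, Complex.I_sq]; ring
  have hω : (-(Complex.I * ω)) ^ 2 = -(ω : ℂ) ^ 2 := by rw [neg_sq, mul_pow, Complex.I_sq]; ring
  have solves_iff : (∀ x t, twoBandOperator n d p q ωb u x t = 0) ↔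
      (ω ^ 2 * (1 + d * k ^ 2) - n * k ^ 2)
        * (ω ^ 2 * (1 + q * k ^ 2) - ωb ^ 2 * (1 + q * k ^ 2) + p * k ^ 2) = 0 := by
    rw [hu_wave, twoBandOperator_expWave, forall_expWave_eq_zero_iff, hk, hω,
      twoBandSymbol_neg_sq, one_mul, Complex.ofReal_eq_zero]
  have branches_iff : (ω ^ 2 * (1 + d * k ^ 2) - n * k ^ 2)
        * (ω ^ 2 * (1 + q * k ^ 2) - ωb ^ 2 * (1 + q * k ^ 2) + p * k ^ 2) = 0 ↔
      (ω ^ 2 = n * k ^ 2 / (1 + d * k ^ 2) ∨ ω ^ 2 = ωb ^ 2 - p * k ^ 2 / (1 + q * k ^ 2)) := by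
    rw [mul_eq_zero, mul_sub_eq_zero_iff_eq_div (by positivity),
      mul_sub_mul_add_eq_zero_iff_eq_sub_div (by positivity)]
  exact ⟨solves_iff, solves_iff.trans branches_iff⟩

/-- The plane wave solves the two-band homogenized equation iff the product of the
(cleared-denominator) acoustic and optical dispersion relations vanishes, and equivalently iff
`ω²` lies on one of the two dispersion branches. -/
theorem stmt_8 (n d p q ωb k ω : ℝ)
    (hn : 0 ≤ n) (hd : 0 ≤ d) (hp : 0 ≤ p) (hq : 0 ≤ q)
    (u : ℝ → ℝ → ℂ)
    (hu : u = fun (x t : ℝ) => Complex.exp (Complex.I * ((k : ℂ) * (x : ℂ) - (ω : ℂ) * (t : ℂ)))) :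
    ((∀ x t : ℝ,
      pdt^[4] u x t - ((q + d : ℝ) : ℂ) * pdt^[4] (pdx^[2] u) x t
        + ((d * q : ℝ) : ℂ) * pdt^[4] (pdx^[4] u) x t
        - ((-ωb ^ 2 * d * q + p * d - n * q : ℝ) : ℂ) * pdt^[2] (pdx^[4] u) x t
        + ((p - ωb ^ 2 * q - ωb ^ 2 * d - n : ℝ) : ℂ) * pdt^[2] (pdx^[2] u) x t
        + ((ωb ^ 2 : ℝ) : ℂ) * pdt^[2] u x t
        - ((ωb ^ 2 * n : ℝ) : ℂ) * pdx^[2] u x t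
        + ((ωb ^ 2 * n * q - n * p : ℝ) : ℂ) * pdx^[4] u x t = 0)
      ↔ (ω ^ 2 * (1 + d * k ^ 2) - n * k ^ 2)
          * (ω ^ 2 * (1 + q * k ^ 2) - ωb ^ 2 * (1 + q * k ^ 2) + p * k ^ 2) = 0)
    ∧ ((∀ x t : ℝ,
      pdt^[4] u x t - ((q + d : ℝ) : ℂ) * pdt^[4] (pdx^[2] u) x t
        + ((d * q : ℝ) : ℂ) * pdt^[4] (pdx^[4] u) x t
        - ((-ωb ^ 2 * d * q + p * d - n * q : ℝ) : ℂ) * pdt^[2] (pdx^[4] u) x t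
        + ((p - ωb ^ 2 * q - ωb ^ 2 * d - n : ℝ) : ℂ) * pdt^[2] (pdx^[2] u) x t
        + ((ωb ^ 2 : ℝ) : ℂ) * pdt^[2] u x t
        - ((ωb ^ 2 * n : ℝ) : ℂ) * pdx^[2] u x t
        + ((ωb ^ 2 * n * q - n * p : ℝ) : ℂ) * pdx^[4] u x t = 0)
      ↔ (ω ^ 2 = n * k ^ 2 / (1 + d * k ^ 2)
          ∨ ω ^ 2 = ωb ^ 2 - p * k ^ 2 / (1 + q * k ^ 2))) :=
  stmt_8_general n d p q ωb k ω hd hq u hu
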